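/- Let w be a k-uniform word and let w' be any cyclic shift (rotation) of w, i.e., w' = v u where w = u v for some factorization of w into words u and v. Then the alternating symbol graphs satisfy G(w') = G(w): two letters alternate in w' if and only if they alternate in w. -/

import Mathlib

/-!
Deleting letters commutes with rotation: if the residual word of `u ++ v` is `r ++ s`, that of
`v ++ u` is `s ++ r`. An alternating word over `{a, b}` that begins and ends with the same letter
has one more copy of that letter than of the other, so in an alternating word `r ++ s` with as
many `a`s as `b`s the last letter of `s` differs from the first letter of `r`, and `s ++ r`
alternates too. Uniformity makes the residual word balanced when both letters occur; when one
of them is absent the residual word is constant, which is the balanced case `a = b`.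
-/

/-- The residWord word `w_{a,b}`: `w` with all letters other than `a`, `b` deleted. -/
def residWord (w : List ℕ) (a b : ℕ) : List ℕ :=
  w.filter (fun c => c = a ∨ c = b)

/-- Letters `a` and `b` alternate in `w`: no two consecutive letters of `w_{a,b}` are equal. -/
def Alternates (w : List ℕ) (a b : ℕ) : Prop :=
  (residWord w a b).Chain' (· ≠ ·)

theorem residual_comm (w : List ℕ) (a b : ℕ) : residWord w a b = residWord w b a := by
  unfold residWord
  apply List.filter_congr
  intro x _
  exact decide_eq_decide.mpr or_comm

/-- The alternating symbol graph `G(w)`: distinct letters `a`, `b` are adjacent iff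
both occur in `w` and alternate in `w`. -/
def altGraph (w : List ℕ) : SimpleGraph ℕ where
  Adj a b := a ≠ b ∧ a ∈ w ∧ b ∈ w ∧ Alternates w a b
  symm := by
    constructor
    rintro a b ⟨h1, h2, h3, h4⟩
    refine ⟨h1.symm, h3, h2, ?_⟩
    unfold Alternates
    rw [residual_comm]
    exact h4
  loopless := by
    constructor
    rintro a ⟨h1, -⟩
    exact h1 rfl

/-- The cycle graph `Cₙ` on vertices `{1, …, n}` (as a graph on `ℕ`):
`k` is adjacent to `k+1` for `1 ≤ k ≤ n-1`, and `n` is adjacent to `1`. -/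
def cycleGraph (n : ℕ) : SimpleGraph ℕ where
  Adj a b := a ≠ b ∧ 1 ≤ a ∧ a ≤ n ∧ 1 ≤ b ∧ b ≤ n ∧
    (b = a + 1 ∨ a = b + 1 ∨ (a = 1 ∧ b = n) ∨ (b = 1 ∧ a = n))
  symm := by
    constructor
    rintro a b ⟨h1, h2, h3, h4, h5, h6⟩
    exact ⟨h1.symm, h4, h5, h2, h3, by tauto⟩
  loopless := by
    constructor
    rintro a ⟨h1, -⟩
    exact h1 rfl

/-- A word is `k`-uniform if every letter occurring in it occurs exactly `k` times. -/
def IsUniform (w : List ℕ) (k : ℕ) : Prop := ∀ a ∈ w, w.count a = k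

/-- The word `wₙ = 1 n 2 1 3 2 4 3 5 4 … (n-1)(n-2) n (n-1)`. -/
def wn (n : ℕ) : List ℕ :=
  [1, n] ++ (List.range (n - 1)).flatMap (fun k => [k + 2, k + 1])

section
variable {α : Type*} [DecidableEq α]

lemma count_eq_count_add_one_of_isChain_ne {x y : α} (hxy : x ≠ y) :
    ∀ {m : List α}, (∀ c ∈ m, c = x ∨ c = y) → (x :: m).IsChain (· ≠ ·) →
      (x :: m).getLast (List.cons_ne_nil x m) = x → (x :: m).count x = (x :: m).count y + 1
  | [], _, _, _ => by simp [hxy]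
  | [z], _, hc, hl => absurd hl.symm (List.isChain_pair.mp hc)
  | z :: w :: m, hm, hc, hl => by
    rw [List.isChain_cons_cons, List.isChain_cons_cons] at hc
    obtain rfl : z = y := (hm z (by simp)).resolve_left (Ne.symm hc.1)
    obtain rfl : w = x := (hm w (by simp)).resolve_right (Ne.symm hc.2.1)
    have ih := count_eq_count_add_one_of_isChain_ne hxy (m := m)
      (fun c hc => hm c (by simp [hc])) hc.2.2 (by simpa using hl)
    simp only [List.count_cons, beq_self_eq_true, beq_iff_eq, hxy, hxy.symm, if_true,
      if_false] at ih ⊢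
    omega

lemma count_ne_count_of_isChain_ne {a b x : α} {m : List α} (hab : a ≠ b)
    (hm : ∀ c ∈ x :: m, c = a ∨ c = b) (hc : (x :: m).IsChain (· ≠ ·))
    (hl : (x :: m).getLast (List.cons_ne_nil x m) = x) : (x :: m).count a ≠ (x :: m).count b := by
  have hm' : ∀ c ∈ m, c = a ∨ c = b := fun c hc => hm c (List.mem_cons_of_mem x hc)
  rcases hm x List.mem_cons_self with rfl | rfl
  · have := count_eq_count_add_one_of_isChain_ne hab hm' hc hl
    omega
  · have := count_eq_count_add_one_of_isChain_ne hab.symm (fun c hc => (hm' c hc).symm) hc hl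
    omega

lemma isChain_ne_append_comm {a b : α} {r s : List α} (hmem : ∀ c ∈ r ++ s, c = a ∨ c = b)
    (hcount : (r ++ s).count a = (r ++ s).count b) (h : (r ++ s).IsChain (· ≠ ·)) :
    (s ++ r).IsChain (· ≠ ·) := by
  obtain ⟨hr, hs, hjoin⟩ := List.isChain_append.mp h
  refine List.isChain_append.mpr ⟨hs, hr, ?_⟩
  rintro x hx _ hy rfl
  obtain ⟨r', rfl⟩ : ∃ r', r = x :: r' := ⟨r.tail, List.eq_cons_of_mem_head? hy⟩
  obtain ⟨s', rfl⟩ : ∃ s', s = s' ++ [x] := List.getLast?_eq_some_iff.mp hx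
  rcases eq_or_ne a b with rfl | hab
  · have hs' : s' ++ [x] ≠ [] := by simp
    have hconst : ∀ c ∈ x :: r' ++ (s' ++ [x]), c = a := fun c hc => (hmem c hc).elim id id
    have hlast := hconst _ (List.mem_append_left _ (List.getLast_mem (List.cons_ne_nil x r')))
    have hhead := hconst _ (List.mem_append_right _ (List.head_mem hs'))
    exact hjoin _ (List.getLast?_eq_some_getLast _) _ (List.head?_eq_some_head hs')
      (hlast.trans hhead.symm)
  · exact count_ne_count_of_isChain_ne (m := r' ++ (s' ++ [x])) hab (by simpa using hmem)
      (by simpa using h) (by simp) (by simpa using hcount)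

end

lemma residWord_append (w w' : List ℕ) (a b : ℕ) :
    residWord (w ++ w') a b = residWord w a b ++ residWord w' a b :=
  List.filter_append _ _

lemma eq_or_eq_of_mem_residWord {w : List ℕ} {a b c : ℕ} (hc : c ∈ residWord w a b) :
    c = a ∨ c = b := by
  simpa using (List.mem_filter.mp hc).2

lemma count_residWord_left (w : List ℕ) (a b : ℕ) : (residWord w a b).count a = w.count a :=
  List.count_filter (by simp)

lemma count_residWord_right (w : List ℕ) (a b : ℕ) : (residWord w a b).count b = w.count b :=
  List.count_filter (by simp)

lemma alternates_comm (w : List ℕ) (a b : ℕ) : Alternates w a b ↔ Alternates w b a := by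
  rw [Alternates, Alternates, residual_comm]

lemma alternates_of_not_mem_left {w : List ℕ} {a : ℕ} (ha : a ∉ w) (b : ℕ) :
    Alternates w a b ↔ Alternates w b b := by
  rw [Alternates, Alternates, residWord, residWord, List.filter_congr]
  intro c hc
  have : c ≠ a := fun h => ha (h ▸ hc)
  simp [this]

lemma Alternates.append_comm_of_count_eq {u v : List ℕ} {a b : ℕ}
    (hcount : (u ++ v).count a = (u ++ v).count b) (h : Alternates (u ++ v) a b) :
    Alternates (v ++ u) a b := by
  rw [Alternates, residWord_append] at h ⊢
  refine isChain_ne_append_comm (a := a) (b := b)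
    (fun c hc => eq_or_eq_of_mem_residWord (w := u ++ v) ?_) ?_ h
  · rwa [residWord_append]
  · rwa [← residWord_append, count_residWord_left, count_residWord_right]

lemma alternates_append_comm {k : ℕ} {u v : List ℕ} (h : IsUniform (u ++ v) k) (a b : ℕ) :
    Alternates (v ++ u) a b ↔ Alternates (u ++ v) a b := by
  have hperm : (u ++ v).Perm (v ++ u) := List.perm_append_comm
  have balanced : ∀ a b, (u ++ v).count a = (u ++ v).count b →
      (Alternates (v ++ u) a b ↔ Alternates (u ++ v) a b) := fun a b hcount =>
    ⟨.append_comm_of_count_eq (by rwa [← hperm.count_eq, ← hperm.count_eq]),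
      .append_comm_of_count_eq hcount⟩
  have absent : ∀ a b, a ∉ u ++ v → (Alternates (v ++ u) a b ↔ Alternates (u ++ v) a b) :=
    fun a b ha => by
      rw [alternates_of_not_mem_left ha, alternates_of_not_mem_left (mt hperm.mem_iff.mpr ha)]
      exact balanced b b rfl
  by_cases ha : a ∈ u ++ v
  · by_cases hb : b ∈ u ++ v
    · exact balanced a b ((h a ha).trans (h b hb).symm)
    · rw [alternates_comm, alternates_comm (u ++ v)]
      exact absent b a hb
  · exact absent a b ha

/-- If `w = u ++ v` is `k`-uniform, then the cyclic shift `w' = v ++ u`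
represents the same graph: `G(w') = G(w)`, and two letters alternate in `w'` iff they
alternate in `w`. -/
theorem altGraph_rotate (k : ℕ) (u v : List ℕ) (h : IsUniform (u ++ v) k) :
    altGraph (v ++ u) = altGraph (u ++ v) ∧
    ∀ a b : ℕ, (Alternates (v ++ u) a b ↔ Alternates (u ++ v) a b) := by
  refine ⟨?_, alternates_append_comm h⟩
  ext a b
  simp only [altGraph, alternates_append_comm h a b, List.perm_append_comm.mem_iff]
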